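/- Let G be a cubic graph with three edges x₁x₂, y₁y₂, z₁z₂ (where x₁, y₁, z₁ are pairwise distinct and x₂, y₂, z₂ are pairwise distinct) such that deleting these three edges leaves exactly two connected components G₁ (containing x₁, y₁, z₁) and G₂ (containing x₂, y₂, z₂), each with at least four vertices. For i = 1, 2, let G_i' be obtained from G_i by adding a new vertex g_i joined to x_i, y_i, z_i, and let G_i'' be obtained from G_i by adding three new vertices x_i', y_i', z_i' forming a triangle together with the edges x_i x_i', y_i y_i', z_i z_i'. If the squares (G₁')², (G₂')², (G₁'')², and (G₂'')² are all 7-colorable, then G² is 7-colorable. -/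

import Mathlib

/-!
Colour the two sides of the cut separately and glue, after permuting the colours of one side.
Across the cut, the only pairs at distance at most 2 join a cut vertex to the closed
neighbourhood of its partner, so gluing works as soon as the colour of each partner is absent
from that neighbourhood ("port colours"). In a colouring of the square of the triangle gadget,
the three triangle colours are such ports, distinct from each other and from the boundary
colours. If the boundaries of both triangle colourings are rainbow, the permutation matches the
boundary colours of each side with the triangle colours of the other. Otherwise the side `S`
whose boundary is not rainbow keeps its triangle colouring and the other side takes its
one-vertex-gadget colouring: the port colours for the other side must repeat exactly where the
boundary colours of `S` repeat, and the colour of the extra vertex together with one fresh colour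
suffice, since a boundary vertex sees at most six colours that must be avoided.
-/

/-- The square of a graph: two distinct vertices are adjacent iff their
distance in `G` is at most 2 (adjacent, or having a common neighbor). -/
def graphSquare {V : Type*} (G : SimpleGraph V) : SimpleGraph V where
  Adj u v := u ≠ v ∧ (G.Adj u v ∨ ∃ w, G.Adj u w ∧ G.Adj w v)
  symm := by
    refine ⟨?_⟩
    rintro u v ⟨hne, h | ⟨w, h1, h2⟩⟩
    · exact ⟨hne.symm, Or.inl h.symm⟩
    · exact ⟨hne.symm, Or.inr ⟨w, h2.symm, h1.symm⟩⟩
  loopless := by refine ⟨?_⟩; rintro u ⟨hne, -⟩; exact hne rfl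

/-- The graph obtained from `H` by adding one new vertex joined to the
vertices in `T`. -/
def addVertex {α : Type*} (H : SimpleGraph α) (T : Set α) : SimpleGraph (Option α) where
  Adj u v :=
    match u, v with
    | some p, some q => H.Adj p q
    | some p, none => p ∈ T
    | none, some q => q ∈ T
    | none, none => False
  symm := by
    refine ⟨?_⟩
    rintro (_ | p) (_ | q) h
    · exact h.elim
    · exact h
    · exact h
    · exact H.adj_symm h
  loopless := by
    refine ⟨?_⟩
    rintro (_ | p) h
    · exact h.elim
    · exact H.irrefl h

/-- The graph obtained from `H` by adding a new triangle on three new vertices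
`0, 1, 2`, joined by a matching to the vertices `a`, `b`, `c` respectively. -/
def addTriangle {α : Type*} (H : SimpleGraph α) (a b c : α) :
    SimpleGraph (α ⊕ Fin 3) where
  Adj u v :=
    match u, v with
    | .inl p, .inl q => H.Adj p q
    | .inr i, .inr j => i ≠ j
    | .inl p, .inr i => (i = 0 ∧ p = a) ∨ (i = 1 ∧ p = b) ∨ (i = 2 ∧ p = c)
    | .inr i, .inl p => (i = 0 ∧ p = a) ∨ (i = 1 ∧ p = b) ∨ (i = 2 ∧ p = c)
  symm := by
    refine ⟨?_⟩
    rintro (p | i) (q | j) h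
    · exact H.adj_symm h
    · exact h
    · exact h
    · exact h.symm
  loopless := by
    refine ⟨?_⟩
    rintro (p | i) h
    · exact H.irrefl h
    · exact h rfl

open Function SimpleGraph

section

variable {α β γ ι V : Type*}

theorem Equiv.Perm.exists_apply_eq_of_eq_iff_eq [Finite ι] (l r : ι → β)
    (h : ∀ x y, l x = l y ↔ r x = r y) : ∃ σ : Perm β, ∀ x, σ (l x) = r x := by
  let R : Quotient (Setoid.ker l) → β := Quotient.lift r fun x y hxy => (h x y).1 hxy
  have hR : Injective R := fun a b => Quotient.inductionOn₂ a b fun x y hxy =>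
    Quotient.sound ((h x y).2 hxy)
  obtain ⟨σ, hσ⟩ := Perm.exists_extending_pair _ R (Setoid.kerLift_injective l) hR
  exact ⟨σ, fun x => hσ ⟦x⟧⟩

theorem SimpleGraph.isCompl_setOf_reachable {G : SimpleGraph V} {a b : V}
    (hab : ¬G.Reachable a b) (hall : ∀ u, G.Reachable u a ∨ G.Reachable u b) :
    IsCompl {u | G.Reachable u a} {u | G.Reachable u b} :=
  isCompl_iff.2 ⟨Set.disjoint_left.2 fun _ ha hb => hab (ha.symm.trans hb),
    codisjoint_iff.2 (Set.eq_univ_of_forall hall)⟩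

theorem Subtype.injective_vecCons_of_pairwise_ne {p : α → Prop} {a b c : Subtype p}
    (h : [a.1, b.1, c.1].Pairwise (· ≠ ·)) : Injective ![a, b, c] :=
  .of_comp (f := Subtype.val) (List.nodup_ofFn.1 h)

theorem SimpleGraph.induce_deleteEdges_eq {G : SimpleGraph V} {D : Set (Sym2 V)} {S : Set V}
    (hD : ∀ e ∈ D, ∃ v ∈ e, v ∉ S) : (G.deleteEdges D).induce S = G.induce S := by
  ext u v
  simp only [comap_adj, deleteEdges_adj, Function.Embedding.coe_subtype, and_iff_left_iff_imp]
  intro _ huv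
  obtain ⟨w, hw, hwS⟩ := hD _ huv
  rcases Sym2.mem_iff.1 hw with rfl | rfl
  exacts [hwS u.2, hwS v.2]

section GraphSquare

variable {H : SimpleGraph α}

theorem graphSquare_adj_of_adj {u v : α} (h : H.Adj u v) : (graphSquare H).Adj u v :=
  ⟨h.ne, Or.inl h⟩

theorem graphSquare_adj_of_adj_of_adj {u w v : α} (huw : H.Adj u w) (hwv : H.Adj w v)
    (hne : u ≠ v) : (graphSquare H).Adj u v :=
  ⟨hne, Or.inr ⟨w, huw, hwv⟩⟩

def graphSquareHom {H' : SimpleGraph β} (f : H ↪g H') : graphSquare H →g graphSquare H' where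
  toFun := f
  map_rel' := by
    rintro u v ⟨hne, huv | ⟨w, huw, hwv⟩⟩
    · exact graphSquare_adj_of_adj (f.map_adj_iff.2 huv)
    · exact graphSquare_adj_of_adj_of_adj (f.map_adj_iff.2 huw) (f.map_adj_iff.2 hwv)
        (f.injective.ne hne)

end GraphSquare

/-- `p i` is a colour that a new neighbour of `b i` outside `H` may take next to the colouring
`f` of `H²`; it also differs from every boundary colour. -/
structure IsPortColoring (H : SimpleGraph α) (f : α → β) (b : ι → α) (p : ι → β) : Prop where
  ne_of_closedNbhd : ∀ i u, (u = b i ∨ H.Adj (b i) u) → f u ≠ p i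
  ne_boundary : ∀ i j, p i ≠ f (b j)

section Gadgets

variable (H : SimpleGraph α)

def addTriangleInl (a b c : α) : H ↪g addTriangle H a b c := ⟨Embedding.inl, Iff.rfl⟩

def addVertexSome (T : Set α) : H ↪g addVertex H T := ⟨Embedding.some, Iff.rfl⟩

theorem addTriangle_adj_inr_inl (b : Fin 3 → α) (i : Fin 3) :
    (addTriangle H (b 0) (b 1) (b 2)).Adj (.inr i) (.inl (b i)) := by
  fin_cases i
  exacts [Or.inl ⟨rfl, rfl⟩, Or.inr (Or.inl ⟨rfl, rfl⟩), Or.inr (Or.inr ⟨rfl, rfl⟩)]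

theorem addTriangle_adj_inr_inr {a b c : α} {i j : Fin 3} :
    (addTriangle H a b c).Adj (.inr i) (.inr j) ↔ i ≠ j := Iff.rfl

theorem addVertex_adj_none_some {T : Set α} {u : α} (h : u ∈ T) :
    (addVertex H T).Adj none (some u) := h

variable {H}

theorem isPortColoring_addTriangle (b : Fin 3 → α)
    (C : (graphSquare (addTriangle H (b 0) (b 1) (b 2))).Coloring β) :
    IsPortColoring H (C.comp (graphSquareHom (addTriangleInl H _ _ _))) b (C ∘ .inr) where
  ne_of_closedNbhd i u hu := by
    refine (C.valid ?_).symm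
    rcases hu with rfl | hu
    · exact graphSquare_adj_of_adj (addTriangle_adj_inr_inl H b i)
    · exact graphSquare_adj_of_adj_of_adj (addTriangle_adj_inr_inl H b i) hu Sum.inr_ne_inl
  ne_boundary i j := by
    obtain rfl | hij := eq_or_ne i j
    · exact C.valid (graphSquare_adj_of_adj (addTriangle_adj_inr_inl H b i))
    · exact C.valid (graphSquare_adj_of_adj_of_adj
        ((addTriangle_adj_inr_inr H).2 hij) (addTriangle_adj_inr_inl H b j) Sum.inr_ne_inl)

theorem injective_addTriangle_inr {a b c : α}
    (C : (graphSquare (addTriangle H a b c)).Coloring β) : Injective (C ∘ .inr) :=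
  fun _ _ hij => by_contra fun hne =>
    C.valid (graphSquare_adj_of_adj ((addTriangle_adj_inr_inr H).2 hne)) hij

variable {T : Set α} {b : ι → α}

theorem ne_of_closedNbhd_addVertex (hb : ∀ i, b i ∈ T)
    (D : (graphSquare (addVertex H T)).Coloring β) (i : ι) (u : α)
    (hu : u = b i ∨ H.Adj (b i) u) : D (some u) ≠ D none := by
  refine (D.valid ?_).symm
  rcases hu with rfl | hu
  · exact graphSquare_adj_of_adj (addVertex_adj_none_some H (hb i))
  · exact graphSquare_adj_of_adj_of_adj (addVertex_adj_none_some H (hb i)) hu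
      (Option.some_ne_none _).symm

theorem injective_addVertex_comp (hb : ∀ i, b i ∈ T) (hinj : Injective b)
    (D : (graphSquare (addVertex H T)).Coloring β) : Injective (D ∘ some ∘ b) :=
  fun i j hij => by_contra fun hne => D.valid
    (graphSquare_adj_of_adj_of_adj (addVertex_adj_none_some H (hb i)).symm
      (addVertex_adj_none_some H (hb j)) (by simpa using hinj.ne hne)) hij

end Gadgets

theorem Fin.exists_forall_eq_or_eq_of_not_injective {κ : Fin 3 → γ} (hκ : ¬Injective κ) :
    ∃ i k, ∀ m, κ m = κ i ∨ m = k := by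
  obtain ⟨i, j, hκij, hij⟩ := not_injective_iff.1 hκ
  have hthird : ∀ i j : Fin 3, i ≠ j → ∃ k, ∀ m, m = i ∨ m = j ∨ m = k := by decide
  obtain ⟨k, hk⟩ := hthird i j hij
  exact ⟨i, k, fun m => by rcases hk m with rfl | rfl | rfl <;> simp [hκij]⟩

theorem exists_isPortColoring_of_not_injective {H : SimpleGraph α} {f : α → Fin 7}
    {b : Fin 3 → α} {d : Fin 7} (hd : ∀ i u, (u = b i ∨ H.Adj (b i) u) → f u ≠ d)
    (hdeg : ∀ i, (H.neighborSet (b i)).encard ≤ 2) {κ : Fin 3 → γ} (hκ : ¬Injective κ) :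
    ∃ p, IsPortColoring H f b p ∧ ∀ i j, p i = p j ↔ κ i = κ j := by
  classical
  obtain ⟨i, k, hik⟩ := Fin.exists_forall_eq_or_eq_of_not_injective hκ
  obtain ⟨t, ht⟩ : ∃ t, t ∉ insert d (f '' (H.neighborSet (b k) ∪ Set.range b)) := by
    refine (Set.ne_univ_iff_exists_notMem _).1 fun h => ?_
    have hle : (insert d (f '' (H.neighborSet (b k) ∪ Set.range b))).encard ≤ 6 := calc
      _ ≤ (H.neighborSet (b k) ∪ Set.range b).encard + 1 :=
        (Set.encard_insert_le _ _).trans (by gcongr; exact Set.encard_image_le _ _)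
      _ ≤ 2 + 3 + 1 := by
        gcongr
        refine (Set.encard_union_le _ _).trans (add_le_add (hdeg k) ?_)
        simpa [← Set.image_univ] using Set.encard_image_le b Set.univ
      _ = 6 := rfl
    rw [h, Set.encard_univ, ENat.card_eq_coe_fintype_card, Fintype.card_fin] at hle
    exact absurd hle (by decide)
  have hdt : d ≠ t := fun h => ht (h ▸ Set.mem_insert _ _)
  have hft : ∀ u, u ∈ H.neighborSet (b k) ∨ u ∈ Set.range b → f u ≠ t :=
    fun u hu h => ht (Or.inr ⟨u, hu, h⟩)
  -- `d` serves the indices in the class of `i`, the fresh colour `t` the remaining index `k`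
  refine ⟨fun m => if κ m = κ i then d else t, ⟨fun m u hu => ?_, fun m l => ?_⟩, fun m l => ?_⟩
  · split_ifs with hm
    · exact hd m u hu
    · obtain rfl := (hik m).resolve_left hm
      rcases hu with rfl | hu
      exacts [hft _ (Or.inr ⟨m, rfl⟩), hft u (Or.inl hu)]
  · split_ifs
    exacts [(hd l _ (Or.inl rfl)).symm, (hft _ (Or.inr ⟨l, rfl⟩)).symm]
  · dsimp only
    split_ifs with hm hl hl
    · exact iff_of_true rfl (hm.trans hl.symm)
    · exact iff_of_false hdt fun h => hl (h ▸ hm)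
    · exact iff_of_false hdt.symm fun h => hm (h.symm ▸ hl)
    · exact iff_of_true rfl (by rw [(hik m).resolve_left hm, (hik l).resolve_left hl])

structure IsMatchingCut (G : SimpleGraph V) (S T : Set V) (e₁ : ι → S) (e₂ : ι → T) : Prop where
  isCompl : IsCompl S T
  injective_left : Injective e₁
  injective_right : Injective e₂
  adj : ∀ i, G.Adj (e₁ i) (e₂ i)
  exists_eq_of_adj : ∀ (u : S) (v : T), G.Adj u v → ∃ i, u = e₁ i ∧ v = e₂ i

namespace IsMatchingCut

section

variable {G : SimpleGraph V} {S T : Set V} {e₁ : ι → S} {e₂ : ι → T}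

theorem symm (h : IsMatchingCut G S T e₁ e₂) : IsMatchingCut G T S e₂ e₁ where
  isCompl := h.isCompl.symm
  injective_left := h.injective_right
  injective_right := h.injective_left
  adj i := (h.adj i).symm
  exists_eq_of_adj v u huv := (h.exists_eq_of_adj u v huv.symm).imp fun _ ⟨hu, hv⟩ => ⟨hv, hu⟩

theorem notMem_right (h : IsMatchingCut G S T e₁ e₂) (u : S) : (u : V) ∉ T :=
  Set.disjoint_left.1 h.isCompl.disjoint u.2

theorem mem_right_of_notMem_left (h : IsMatchingCut G S T e₁ e₂) {u : V} (hu : u ∉ S) :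
    u ∈ T :=
  h.isCompl.compl_eq ▸ hu

theorem of_deleteEdges {D : Set (Sym2 V)} (hST : IsCompl S T) (he₁ : Injective e₁)
    (he₂ : Injective e₂) (hadj : ∀ i, G.Adj (e₁ i) (e₂ i))
    (hD : ∀ e ∈ D, ∃ i, e = s(↑(e₁ i), ↑(e₂ i)))
    (hS : ∀ u v, (G.deleteEdges D).Adj u v → u ∈ S → v ∈ S) : IsMatchingCut G S T e₁ e₂ where
  isCompl := hST
  injective_left := he₁
  injective_right := he₂
  adj := hadj
  exists_eq_of_adj u v huv := by
    have hdel : s(↑u, ↑v) ∈ D := by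
      by_contra hnot
      exact Set.disjoint_left.1 hST.disjoint (hS _ _ (deleteEdges_adj.2 ⟨huv, hnot⟩) u.2) v.2
    obtain ⟨i, hi⟩ := hD _ hdel
    rcases Sym2.eq_iff.1 hi with ⟨hu, hv⟩ | ⟨hu, -⟩
    · exact ⟨i, Subtype.ext hu, Subtype.ext hv⟩
    · exact absurd (hu ▸ (e₂ i).2) (Set.disjoint_left.1 hST.disjoint u.2)

theorem induce_deleteEdges (h : IsMatchingCut G S T e₁ e₂) {D : Set (Sym2 V)}
    (hD : ∀ e ∈ D, ∃ i, e = s(↑(e₁ i), ↑(e₂ i))) :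
    (G.deleteEdges D).induce S = G.induce S ∧ (G.deleteEdges D).induce T = G.induce T := by
  constructor <;> refine induce_deleteEdges_eq fun e he => ?_ <;> obtain ⟨i, rfl⟩ := hD e he
  · exact ⟨e₂ i, Sym2.mem_mk_right _ _, h.symm.notMem_right _⟩
  · exact ⟨e₁ i, Sym2.mem_mk_left _ _, h.notMem_right _⟩

theorem graphSquare_induce_adj (h : IsMatchingCut G S T e₁ e₂) {u v : S}
    (huv : (graphSquare G).Adj u v) : (graphSquare (G.induce S)).Adj u v := by
  obtain ⟨hne, huv | ⟨w, huw, hwv⟩⟩ := huv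
  · exact graphSquare_adj_of_adj huv
  by_cases hw : w ∈ S
  · exact graphSquare_adj_of_adj_of_adj (u := u) (w := ⟨w, hw⟩) huw hwv (Subtype.coe_ne_coe.1 hne)
  -- a common neighbour across the cut would be the partner of both `u` and `v`
  obtain ⟨i, rfl, hi⟩ := h.exists_eq_of_adj u ⟨w, h.mem_right_of_notMem_left hw⟩ huw
  obtain ⟨j, rfl, hj⟩ := h.exists_eq_of_adj v ⟨w, h.mem_right_of_notMem_left hw⟩ hwv.symm
  exact absurd (by rw [h.injective_right (hi.symm.trans hj)]) hne

theorem exists_closedNbhd_of_graphSquare_adj (h : IsMatchingCut G S T e₁ e₂) {u : S} {v : T}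
    (huv : (graphSquare G).Adj u v) :
    ∃ i, (u = e₁ i ∨ G.Adj (e₁ i) u) ∧ v = e₂ i ∨ u = e₁ i ∧ (v = e₂ i ∨ G.Adj (e₂ i) v) := by
  obtain ⟨-, huv | ⟨w, huw, hwv⟩⟩ := huv
  · obtain ⟨i, hu, hv⟩ := h.exists_eq_of_adj u v huv
    exact ⟨i, .inl ⟨.inl hu, hv⟩⟩
  by_cases hw : w ∈ S
  · obtain ⟨i, hw, hv⟩ := h.exists_eq_of_adj ⟨w, hw⟩ v hwv
    refine ⟨i, .inl ⟨.inr ?_, hv⟩⟩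
    simpa [← hw] using huw.symm
  · obtain ⟨i, hu, hw⟩ := h.exists_eq_of_adj u ⟨w, h.mem_right_of_notMem_left hw⟩ huw
    refine ⟨i, .inr ⟨hu, .inr ?_⟩⟩
    simpa [← hw] using hwv

theorem nonempty_coloring_graphSquare (h : IsMatchingCut G S T e₁ e₂)
    (f₁ : (graphSquare (G.induce S)).Coloring β) (f₂ : (graphSquare (G.induce T)).Coloring β)
    (h₁ : ∀ i u, (u = e₁ i ∨ G.Adj (e₁ i) u) → f₁ u ≠ f₂ (e₂ i))
    (h₂ : ∀ i v, (v = e₂ i ∨ G.Adj (e₂ i) v) → f₂ v ≠ f₁ (e₁ i)) :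
    Nonempty ((graphSquare G).Coloring β) := by
  classical
  have hcross : ∀ (u : S) (v : T), (graphSquare G).Adj u v → f₁ u ≠ f₂ v := by
    intro u v huv
    obtain ⟨i, ⟨hu, rfl⟩ | ⟨rfl, hv⟩⟩ := h.exists_closedNbhd_of_graphSquare_adj huv
    · exact h₁ i u hu
    · exact (h₂ i v hv).symm
  let c : V → β := fun u =>
    if hu : u ∈ S then f₁ ⟨u, hu⟩ else f₂ ⟨u, h.mem_right_of_notMem_left hu⟩
  refine ⟨Coloring.mk c fun {u v} huv => ?_⟩
  by_cases hu : u ∈ S <;> by_cases hv : v ∈ S <;> simp only [c, hu, hv, ↓reduceDIte]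
  · exact f₁.valid (h.graphSquare_induce_adj (u := ⟨u, hu⟩) (v := ⟨v, hv⟩) huv)
  · exact hcross ⟨u, hu⟩ ⟨v, _⟩ huv
  · exact (hcross ⟨v, hv⟩ ⟨u, _⟩ huv.symm).symm
  · exact f₂.valid (h.symm.graphSquare_induce_adj (u := ⟨u, _⟩) (v := ⟨v, _⟩) huv)

theorem encard_neighborSet_induce_right_le (h : IsMatchingCut G S T e₁ e₂) {n : ℕ∞} {i : ι}
    (hdeg : (G.neighborSet (e₂ i)).encard ≤ n + 1) :
    ((G.induce T).neighborSet (e₂ i)).encard ≤ n := by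
  have hsub : Subtype.val '' (G.induce T).neighborSet (e₂ i) ⊆
      G.neighborSet (e₂ i) \ {↑(e₁ i)} := by
    rintro _ ⟨u, hu, rfl⟩
    exact ⟨hu, fun hu' => h.notMem_right (e₁ i) (hu' ▸ u.2)⟩
  rw [← ENat.add_le_add_iff_right ENat.one_ne_top, ← Subtype.val_injective.encard_image]
  calc _ ≤ (G.neighborSet (e₂ i) \ {↑(e₁ i)}).encard + 1 := by gcongr
    _ = (G.neighborSet (e₂ i)).encard := Set.encard_sdiff_singleton_add_one (h.adj i).symm
    _ ≤ n + 1 := hdeg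

theorem nonempty_coloring_graphSquare_of_isPortColoring [Finite ι]
    (h : IsMatchingCut G S T e₁ e₂)
    (f₁ : (graphSquare (G.induce S)).Coloring β) (f₂ : (graphSquare (G.induce T)).Coloring β)
    {p₁ p₂ : ι → β} (hp₁ : IsPortColoring (G.induce S) f₁ e₁ p₁)
    (hp₂ : IsPortColoring (G.induce T) f₂ e₂ p₂)
    (hker₁ : ∀ i j, p₁ i = p₁ j ↔ f₂ (e₂ i) = f₂ (e₂ j))
    (hker₂ : ∀ i j, p₂ i = p₂ j ↔ f₁ (e₁ i) = f₁ (e₁ j)) :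
    Nonempty ((graphSquare G).Coloring β) := by
  obtain ⟨σ, hσ⟩ := Equiv.Perm.exists_apply_eq_of_eq_iff_eq
    (Sum.elim (f₂ ∘ e₂) p₂) (Sum.elim p₁ (f₁ ∘ e₁)) <| by
      rintro (i | i) (j | j)
      · exact (hker₁ i j).symm
      · exact iff_of_false (hp₂.ne_boundary j i).symm (hp₁.ne_boundary i j)
      · exact iff_of_false (hp₂.ne_boundary i j) (hp₁.ne_boundary j i).symm
      · exact hker₂ i j
  refine h.nonempty_coloring_graphSquare f₁ (recolorOfEquiv _ σ f₂) (fun i u hu => ?_)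
    fun i v hv => ?_
  · have hσi : σ (f₂ (e₂ i)) = p₁ i := hσ (.inl i)
    simpa [hσi] using hp₁.ne_of_closedNbhd i u hu
  · have hσi : σ (p₂ i) = f₁ (e₁ i) := hσ (.inr i)
    simpa [← hσi] using hp₂.ne_of_closedNbhd i v hv

end

section

variable {G : SimpleGraph V} {S T : Set V} {e₁ : Fin 3 → S} {e₂ : Fin 3 → T}

theorem nonempty_coloring_of_addTriangle_of_addTriangle (h : IsMatchingCut G S T e₁ e₂)
    (C₁ : (graphSquare (addTriangle (G.induce S) (e₁ 0) (e₁ 1) (e₁ 2))).Coloring β)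
    (C₂ : (graphSquare (addTriangle (G.induce T) (e₂ 0) (e₂ 1) (e₂ 2))).Coloring β)
    (h₁ : Injective (C₁ ∘ .inl ∘ e₁)) (h₂ : Injective (C₂ ∘ .inl ∘ e₂)) :
    Nonempty ((graphSquare G).Coloring β) :=
  h.nonempty_coloring_graphSquare_of_isPortColoring _ _
    (isPortColoring_addTriangle e₁ C₁) (isPortColoring_addTriangle e₂ C₂)
    (fun _ _ => (injective_addTriangle_inr C₁).eq_iff.trans h₂.eq_iff.symm)
    (fun _ _ => (injective_addTriangle_inr C₂).eq_iff.trans h₁.eq_iff.symm)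

theorem colorable_of_addTriangle_of_addVertex (h : IsMatchingCut G S T e₁ e₂)
    (hdeg : ∀ i, (G.neighborSet (e₂ i)).encard ≤ 3)
    (C : (graphSquare (addTriangle (G.induce S) (e₁ 0) (e₁ 1) (e₁ 2))).Coloring (Fin 7))
    (D : (graphSquare (addVertex (G.induce T) {e₂ 0, e₂ 1, e₂ 2})).Coloring (Fin 7))
    (hC : ¬Injective (C ∘ .inl ∘ e₁)) : (graphSquare G).Colorable 7 := by
  have hb : ∀ i, e₂ i ∈ ({e₂ 0, e₂ 1, e₂ 2} : Set T) := by
    intro i; fin_cases i <;> simp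
  obtain ⟨p, hp, hker⟩ := exists_isPortColoring_of_not_injective
    (ne_of_closedNbhd_addVertex hb D) (fun i => h.encard_neighborSet_induce_right_le (hdeg i)) hC
  exact h.nonempty_coloring_graphSquare_of_isPortColoring _
    (D.comp (graphSquareHom (addVertexSome _ _))) (isPortColoring_addTriangle e₁ C) hp
    (fun _ _ => (injective_addTriangle_inr C).eq_iff.trans
      (injective_addVertex_comp hb h.injective_right D).eq_iff.symm) hker

end

end IsMatchingCut

end

theorem colorable_square_of_three_edge_cut_general
    {V : Type*} (G : SimpleGraph V)
    (hcubic : ∀ u : V, {w | G.Adj u w}.ncard = 3)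
    (x₁ x₂ y₁ y₂ z₁ z₂ : V)
    (h1d : ([x₁, y₁, z₁] : List V).Pairwise (· ≠ ·))
    (h2d : ([x₂, y₂, z₂] : List V).Pairwise (· ≠ ·))
    (hex : G.Adj x₁ x₂) (hey : G.Adj y₁ y₂) (hez : G.Adj z₁ z₂)
    (G' : SimpleGraph V)
    (hG' : G' = G.deleteEdges {s(x₁, x₂), s(y₁, y₂), s(z₁, z₂)})
    (hsep : ¬ G'.Reachable x₁ x₂)
    (hall : ∀ u : V, G'.Reachable u x₁ ∨ G'.Reachable u x₂)
    (hy1 : G'.Reachable y₁ x₁) (hz1 : G'.Reachable z₁ x₁)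
    (hy2 : G'.Reachable y₂ x₂) (hz2 : G'.Reachable z₂ x₂)
    (hG1' : (graphSquare (addVertex (G'.induce {u | G'.Reachable u x₁})
        {⟨x₁, SimpleGraph.Reachable.refl x₁⟩, ⟨y₁, hy1⟩, ⟨z₁, hz1⟩})).Colorable 7)
    (hG2' : (graphSquare (addVertex (G'.induce {u | G'.Reachable u x₂})
        {⟨x₂, SimpleGraph.Reachable.refl x₂⟩, ⟨y₂, hy2⟩, ⟨z₂, hz2⟩})).Colorable 7)
    (hG1'' : (graphSquare (addTriangle (G'.induce {u | G'.Reachable u x₁})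
        ⟨x₁, SimpleGraph.Reachable.refl x₁⟩ ⟨y₁, hy1⟩ ⟨z₁, hz1⟩)).Colorable 7)
    (hG2'' : (graphSquare (addTriangle (G'.induce {u | G'.Reachable u x₂})
        ⟨x₂, SimpleGraph.Reachable.refl x₂⟩ ⟨y₂, hy2⟩ ⟨z₂, hz2⟩)).Colorable 7) :
    (graphSquare G).Colorable 7 := by
  let e₁ : Fin 3 → {u | G'.Reachable u x₁} := ![⟨x₁, .refl x₁⟩, ⟨y₁, hy1⟩, ⟨z₁, hz1⟩]
  let e₂ : Fin 3 → {u | G'.Reachable u x₂} := ![⟨x₂, .refl x₂⟩, ⟨y₂, hy2⟩, ⟨z₂, hz2⟩]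
  have hD : ∀ e ∈ ({s(x₁, x₂), s(y₁, y₂), s(z₁, z₂)} : Set (Sym2 V)),
      ∃ i, e = s(↑(e₁ i), ↑(e₂ i)) := by
    rintro e (rfl | rfl | rfl)
    exacts [⟨0, rfl⟩, ⟨1, rfl⟩, ⟨2, rfl⟩]
  have hcut : IsMatchingCut G _ _ e₁ e₂ := .of_deleteEdges (isCompl_setOf_reachable hsep hall)
    (Subtype.injective_vecCons_of_pairwise_ne h1d) (Subtype.injective_vecCons_of_pairwise_ne h2d)
    (fun i => by fin_cases i; exacts [hex, hey, hez]) hD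
    fun _ _ huv hu => (hG' ▸ huv : G'.Adj _ _).symm.reachable.trans hu
  have hdeg : ∀ v, (G.neighborSet v).encard ≤ 3 := fun v =>
    Set.encard_le_coe_iff_finite_ncard_le.2
      ⟨Set.finite_of_ncard_ne_zero ((hcubic v).trans_ne three_ne_zero), (hcubic v).le⟩
  obtain ⟨hind₁, hind₂⟩ := hcut.induce_deleteEdges hD
  rw [← hG'] at hind₁ hind₂
  rw [hind₁] at hG1' hG1''
  rw [hind₂] at hG2' hG2''
  obtain ⟨C₁⟩ := hG1''
  obtain ⟨C₂⟩ := hG2''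
  obtain ⟨D₁⟩ := hG1'
  obtain ⟨D₂⟩ := hG2'
  by_cases h₁ : Injective (C₁ ∘ .inl ∘ e₁)
  · by_cases h₂ : Injective (C₂ ∘ .inl ∘ e₂)
    · exact hcut.nonempty_coloring_of_addTriangle_of_addTriangle C₁ C₂ h₁ h₂
    · exact hcut.symm.colorable_of_addTriangle_of_addVertex (fun _ => hdeg _) C₂ D₁ h₂
  · exact hcut.colorable_of_addTriangle_of_addVertex (fun _ => hdeg _) C₁ D₂ h₁

/-- Let `G` be a cubic graph with three edges `x₁x₂`, `y₁y₂`, `z₁z₂` whose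
deletion leaves exactly two components `G₁ ∋ x₁, y₁, z₁` and `G₂ ∋ x₂, y₂, z₂`,
each with at least four vertices. For `i = 1, 2`, let `Gᵢ'` be `Gᵢ` plus a new
vertex joined to `xᵢ, yᵢ, zᵢ`, and `Gᵢ''` be `Gᵢ` plus a new triangle matched
to `xᵢ, yᵢ, zᵢ`. If the squares of `G₁'`, `G₂'`, `G₁''`, `G₂''` are all
`7`-colorable, then `G²` is `7`-colorable. -/
theorem colorable_square_of_three_edge_cut
    {V : Type*} [Fintype V] (G : SimpleGraph V)
    (hcubic : ∀ u : V, {w | G.Adj u w}.ncard = 3)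
    (x₁ x₂ y₁ y₂ z₁ z₂ : V)
    (h1d : ([x₁, y₁, z₁] : List V).Pairwise (· ≠ ·))
    (h2d : ([x₂, y₂, z₂] : List V).Pairwise (· ≠ ·))
    (hex : G.Adj x₁ x₂) (hey : G.Adj y₁ y₂) (hez : G.Adj z₁ z₂)
    (G' : SimpleGraph V)
    (hG' : G' = G.deleteEdges {s(x₁, x₂), s(y₁, y₂), s(z₁, z₂)})
    (hsep : ¬ G'.Reachable x₁ x₂)
    (hall : ∀ u : V, G'.Reachable u x₁ ∨ G'.Reachable u x₂)
    (hy1 : G'.Reachable y₁ x₁) (hz1 : G'.Reachable z₁ x₁)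
    (hy2 : G'.Reachable y₂ x₂) (hz2 : G'.Reachable z₂ x₂)
    (hcard1 : 4 ≤ {u | G'.Reachable u x₁}.ncard)
    (hcard2 : 4 ≤ {u | G'.Reachable u x₂}.ncard)
    (hG1' : (graphSquare (addVertex (G'.induce {u | G'.Reachable u x₁})
        {⟨x₁, SimpleGraph.Reachable.refl x₁⟩, ⟨y₁, hy1⟩, ⟨z₁, hz1⟩})).Colorable 7)
    (hG2' : (graphSquare (addVertex (G'.induce {u | G'.Reachable u x₂})
        {⟨x₂, SimpleGraph.Reachable.refl x₂⟩, ⟨y₂, hy2⟩, ⟨z₂, hz2⟩})).Colorable 7)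
    (hG1'' : (graphSquare (addTriangle (G'.induce {u | G'.Reachable u x₁})
        ⟨x₁, SimpleGraph.Reachable.refl x₁⟩ ⟨y₁, hy1⟩ ⟨z₁, hz1⟩)).Colorable 7)
    (hG2'' : (graphSquare (addTriangle (G'.induce {u | G'.Reachable u x₂})
        ⟨x₂, SimpleGraph.Reachable.refl x₂⟩ ⟨y₂, hy2⟩ ⟨z₂, hz2⟩)).Colorable 7) :
    (graphSquare G).Colorable 7 :=
  colorable_square_of_three_edge_cut_general G hcubic x₁ x₂ y₁ y₂ z₁ z₂ h1d h2d hex hey hez G' hG'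
    hsep hall hy1 hz1 hy2 hz2 hG1' hG2' hG1'' hG2''
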